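/- For any X, Y ∈ ℝ^{nd×d} with d×d blocks X_1,…,X_n and Y_1,…,Y_n satisfying min_{1≤i≤n}(σ_min(X_i) + σ_min(Y_i)) > 0, one has d_F(P_n(X), P_n(Y)) ≤ 2·d_F(X,Y) / min_{1≤i≤n}(σ_min(X_i) + σ_min(Y_i)). -/

import Mathlib

open MeasureTheory Matrix Filter

namespace GOPP

/-- Frobenius norm of a real matrix. -/
noncomputable def frob {α β : Type*} [Fintype α] [Fintype β] (X : Matrix α β ℝ) : ℝ :=
  Real.sqrt (∑ i, ∑ j, X i j ^ 2)

/-- Euclidean norm of a vector. -/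
noncomputable def vnorm {β : Type*} [Fintype β] (v : β → ℝ) : ℝ :=
  Real.sqrt (∑ j, v j ^ 2)

/-- Operator (spectral) norm: the supremum of ‖Xu‖ over unit vectors u. -/
noncomputable def opNorm {α β : Type*} [Fintype α] [Fintype β] (X : Matrix α β ℝ) : ℝ :=
  sSup {r : ℝ | ∃ u : β → ℝ, vnorm u = 1 ∧ r = vnorm (X.mulVec u)}

/-- Smallest singular value: the infimum of ‖uᵀX‖ over unit vectors u (for a d×m matrix
with d ≤ m this is the d-th largest singular value; for square matrices it is σ_min). -/
noncomputable def sigmaMin {α β : Type*} [Fintype α] [Fintype β] (X : Matrix α β ℝ) : ℝ :=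
  sInf {r : ℝ | ∃ u : α → ℝ, vnorm u = 1 ∧ r = vnorm (Matrix.vecMul u X)}

/-- Condition number κ = σ_max/σ_min. -/
noncomputable def kappa {d m : ℕ} (A : Matrix (Fin d) (Fin m) ℝ) : ℝ :=
  opNorm A / sigmaMin A

/-- Q is an orthogonal matrix. -/
def IsOrth {d : ℕ} (Q : Matrix (Fin d) (Fin d) ℝ) : Prop :=
  Qᵀ * Q = 1 ∧ Q * Qᵀ = 1

/-- Nuclear norm, via the dual characterization ‖M‖_* = max_{Q ∈ O(d)} ⟨Q, M⟩. -/
noncomputable def nuclearNorm {d : ℕ} (M : Matrix (Fin d) (Fin d) ℝ) : ℝ :=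
  sSup {r : ℝ | ∃ Q : Matrix (Fin d) (Fin d) ℝ, IsOrth Q ∧ r = Matrix.trace (Qᵀ * M)}

/-- The i-th d×k block of an (nd)×k block matrix. -/
def blk {n d k : ℕ} (S : Matrix (Fin n × Fin d) (Fin k) ℝ) (i : Fin n) :
    Matrix (Fin d) (Fin k) ℝ :=
  Matrix.of fun a b => S (i, a) b

/-- The i-th diagonal d×d block of an (nd)×(nd) matrix. -/
def dblk {n d : ℕ} (G : Matrix (Fin n × Fin d) (Fin n × Fin d) ℝ) (i : Fin n) :
    Matrix (Fin d) (Fin d) ℝ :=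
  Matrix.of fun a b => G (i, a) (i, b)

/-- S ∈ O(d)^{⊗n}: each of the n d×d blocks of S is orthogonal. -/
def OrthBlocks {n d : ℕ} (S : Matrix (Fin n × Fin d) (Fin d) ℝ) : Prop :=
  ∀ i, IsOrth (blk S i)

/-- Z ∈ ℝ^{nd×d}: the vertical stack of n copies of I_d. -/
def ZStack (n d : ℕ) : Matrix (Fin n × Fin d) (Fin d) ℝ :=
  Matrix.of fun p j => if p.2 = j then 1 else 0

/-- Vertical stack of n given d×k matrices. -/
def stack {n d k : ℕ} (B : Fin n → Matrix (Fin d) (Fin k) ℝ) :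
    Matrix (Fin n × Fin d) (Fin k) ℝ :=
  Matrix.of fun p b => B p.1 p.2 b

/-- d_F(X,Y) = min_{Q ∈ O(d)} ‖X − YQ‖_F. -/
noncomputable def dF {n d : ℕ} (X Y : Matrix (Fin n × Fin d) (Fin d) ℝ) : ℝ :=
  sInf {r : ℝ | ∃ Q, IsOrth Q ∧ r = frob (X - Y * Q)}

/-- R is a polar factor P(X) of X: an orthogonal global minimizer of ‖X − Q‖_F over O(d). -/
def IsPolar {d : ℕ} (X R : Matrix (Fin d) (Fin d) ℝ) : Prop :=
  IsOrth R ∧ ∀ Q : Matrix (Fin d) (Fin d) ℝ, IsOrth Q → frob (X - R) ≤ frob (X - Q)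

/-- S = P_n(X): blockwise polar factor. -/
def IsPolarBlocks {n d : ℕ} (X S : Matrix (Fin n × Fin d) (Fin d) ℝ) : Prop :=
  ∀ i, IsPolar (blk X i) (blk S i)

/-- U collects (an orthonormal basis of the span of) the top d left singular vectors of D:
U has orthonormal columns and maximizes the Ky Fan quantity trace(Uᵀ(DDᵀ)U). -/
def IsTopSingVecs {N : Type*} [Fintype N] {d m : ℕ} (D : Matrix N (Fin m) ℝ)
    (U : Matrix N (Fin d) ℝ) : Prop :=
  Uᵀ * U = 1 ∧ ∀ Q : Matrix N (Fin d) ℝ, Qᵀ * Q = 1 →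
    Matrix.trace (Qᵀ * (D * Dᵀ) * Q) ≤ Matrix.trace (Uᵀ * (D * Dᵀ) * U)

/-- (U, S, V) is a top-d singular triple of D: orthonormal U, V, diagonal nonnegative S,
DV = US, DᵀU = VS, and U spans a top-d left singular subspace. -/
def IsSVDTriple {N : Type*} [Fintype N] {d m : ℕ} (D : Matrix N (Fin m) ℝ)
    (U : Matrix N (Fin d) ℝ) (S : Matrix (Fin d) (Fin d) ℝ)
    (V : Matrix (Fin m) (Fin d) ℝ) : Prop :=
  Vᵀ * V = 1 ∧ (∀ a b, a ≠ b → S a b = 0) ∧ (∀ a, 0 ≤ S a a) ∧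
    D * V = U * S ∧ Dᵀ * U = V * S ∧ IsTopSingVecs D U

/-- The generalized power method sequence with spectral initialization, run on the data
matrix D (so with C = DDᵀ): S⁰ = P_n(U) for top singular vectors U of D, and
S^{t+1} = P_n(C Sᵗ). -/
def IsGPM {n d m : ℕ} (D : Matrix (Fin n × Fin d) (Fin m) ℝ)
    (S : ℕ → Matrix (Fin n × Fin d) (Fin d) ℝ) : Prop :=
  (∃ U, IsTopSingVecs D U ∧ IsPolarBlocks U (S 0)) ∧
    ∀ t, IsPolarBlocks (D * Dᵀ * S t) (S (t + 1))

/-- W^(i): W with its i-th block row replaced by 0. -/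
def mask {n d m : ℕ} (W : Matrix (Fin n × Fin d) (Fin m) ℝ) (i : Fin n) :
    Matrix (Fin n × Fin d) (Fin m) ℝ :=
  Matrix.of fun p b => if p.1 = i then 0 else W p b

/-- The noise matrix Δ = WAᵀZᵀ + ZAWᵀ + σWWᵀ. -/
noncomputable def delta {n d m : ℕ} (A : Matrix (Fin d) (Fin m) ℝ)
    (W : Matrix (Fin n × Fin d) (Fin m) ℝ) (σ : ℝ) :
    Matrix (Fin n × Fin d) (Fin n × Fin d) ℝ :=
  W * Aᵀ * (ZStack n d)ᵀ + ZStack n d * A * Wᵀ + σ • (W * Wᵀ)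

/-- The i-th block column Δ_i = WAᵀ + ZAW_iᵀ + σWW_iᵀ of Δ. -/
noncomputable def deltaCol {n d m : ℕ} (A : Matrix (Fin d) (Fin m) ℝ)
    (W : Matrix (Fin n × Fin d) (Fin m) ℝ) (σ : ℝ) (i : Fin n) :
    Matrix (Fin n × Fin d) (Fin d) ℝ :=
  W * Aᵀ + ZStack n d * A * (blk W i)ᵀ + σ • (W * (blk W i)ᵀ)

/-- The operator L S = C S/(n‖A‖²) with C = ZAAᵀZᵀ + σΔ. -/
noncomputable def Lop {n d m : ℕ} (A : Matrix (Fin d) (Fin m) ℝ)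
    (W : Matrix (Fin n × Fin d) (Fin m) ℝ) (σ : ℝ)
    (S : Matrix (Fin n × Fin d) (Fin d) ℝ) : Matrix (Fin n × Fin d) (Fin d) ℝ :=
  ((n : ℝ) * opNorm A ^ 2)⁻¹ •
    ((ZStack n d * A * Aᵀ * (ZStack n d)ᵀ + σ • delta A W σ) * S)

/-- √(nd) + √m + √(2γ n log n). -/
noncomputable def bnd1 (n d m : ℕ) (γ : ℝ) : ℝ :=
  Real.sqrt ((n : ℝ) * d) + Real.sqrt (m : ℝ) + Real.sqrt (2 * γ * n * Real.log n)

/-- √(nd) + √m + √(2γ log n). -/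
noncomputable def bnd2 (n d m : ℕ) (γ : ℝ) : ℝ :=
  Real.sqrt ((n : ℝ) * d) + Real.sqrt (m : ℝ) + Real.sqrt (2 * γ * Real.log n)

/-- The basin of attraction N_ε. -/
def memNeps {n d : ℕ} (ε : ℝ) (S : Matrix (Fin n × Fin d) (Fin d) ℝ) : Prop :=
  OrthBlocks S ∧ dF S (ZStack n d) ≤ ε * Real.sqrt ((n : ℝ) * d)

/-- The basin of attraction N_{ξ,∞}. -/
def memNxi {n d m : ℕ} (W : Matrix (Fin n × Fin d) (Fin m) ℝ) (γ ξ : ℝ)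
    (S : Matrix (Fin n × Fin d) (Fin d) ℝ) : Prop :=
  OrthBlocks S ∧ ∀ i, frob (blk W i * Wᵀ * S) ≤ ξ * Real.sqrt (d : ℝ) * bnd1 n d m γ ^ 2

/-- The distribution of a matrix with i.i.d. standard Gaussian N(0,1) entries. -/
noncomputable def stdGaussian (ι κ : Type*) [Fintype ι] [Fintype κ] :
    Measure (ι → κ → ℝ) :=
  Measure.pi fun _ : ι => Measure.pi fun _ : κ => ProbabilityTheory.gaussianReal 0 1

/-! A polar factor `R` of `X` maximizes `trace (Qᵀ * X)` over orthogonal `Q`. Testing this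
against Householder reflections and plane rotations shows that `M = Rᵀ * X` is symmetric with
eigenvalues at least `σ_min X`. If `R'` is a polar factor of `Y` with `M' = R'ᵀ * Y`, then
`W = Rᵀ * R' - 1` solves the Sylvester equation `M * W + W * M' = (X - Y)ᵀ * R' - Rᵀ * (X - Y)`;
diagonalizing `M` and `M'` bounds the left side below by `(σ_min X + σ_min Y) ‖W‖`, the right
side is at most `2 ‖X - Y‖`, and `‖W‖ = ‖R - R'‖`. Apply this blockwise to `X` and `Y * Q`
(whose polar factor is `P(Y) * Q`) and minimize over orthogonal `Q`. -/

open scoped Matrix.Norms.Frobenius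

section Frobenius

variable {m n : Type*} [Fintype m] [Fintype n]

lemma frob_eq_norm (X : Matrix m n ℝ) : frob X = ‖X‖ := by
  rw [frobenius_norm_def, frob, Real.sqrt_eq_rpow]
  simp

lemma frob_nonneg (X : Matrix m n ℝ) : 0 ≤ frob X := Real.sqrt_nonneg _

lemma frob_sub_le (X Y : Matrix m n ℝ) : frob (X - Y) ≤ frob X + frob Y := by
  simpa only [frob_eq_norm] using norm_sub_le X Y

lemma frob_sub_comm (X Y : Matrix m n ℝ) : frob (X - Y) = frob (Y - X) := by
  simpa only [frob_eq_norm] using norm_sub_rev X Y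

lemma frob_transpose (X : Matrix m n ℝ) : frob Xᵀ = frob X := by
  simpa only [frob_eq_norm] using frobenius_norm_transpose X

lemma frob_sq_eq_sum (X : Matrix m n ℝ) : frob X ^ 2 = ∑ i, ∑ j, X i j ^ 2 :=
  Real.sq_sqrt (by positivity)

lemma frob_sq (X : Matrix m n ℝ) : frob X ^ 2 = trace (X * Xᵀ) := by
  rw [frob_sq_eq_sum]
  simp [Matrix.trace, Matrix.mul_apply, sq]

end Frobenius

section VNorm

variable {n : Type*} [Fintype n]

lemma vnorm_nonneg (v : n → ℝ) : 0 ≤ vnorm v := Real.sqrt_nonneg _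

lemma vnorm_eq_norm (v : n → ℝ) : vnorm v = ‖WithLp.toLp 2 v‖ := by
  simp [vnorm, EuclideanSpace.norm_eq]

lemma dotProduct_self_eq_vnorm_sq (v : n → ℝ) : v ⬝ᵥ v = vnorm v ^ 2 := by
  rw [vnorm, Real.sq_sqrt (by positivity)]
  simp [dotProduct, sq]

end VNorm

section Orthogonal

variable {d : ℕ} {Q R : Matrix (Fin d) (Fin d) ℝ}

lemma isOrth_one : IsOrth (1 : Matrix (Fin d) (Fin d) ℝ) := by
  constructor <;> simp

lemma IsOrth.transpose (hQ : IsOrth Q) : IsOrth Qᵀ := by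
  rw [IsOrth, transpose_transpose]
  exact hQ.symm

lemma IsOrth.mul (hQ : IsOrth Q) (hR : IsOrth R) : IsOrth (Q * R) := by
  constructor
  · rw [transpose_mul, Matrix.mul_assoc, ← Matrix.mul_assoc Qᵀ, hQ.1, Matrix.one_mul, hR.1]
  · rw [transpose_mul, Matrix.mul_assoc, ← Matrix.mul_assoc R, hR.2, Matrix.one_mul, hQ.2]

lemma frob_mul_isOrth {m : Type*} [Fintype m] (A : Matrix m (Fin d) ℝ) (hQ : IsOrth Q) :
    frob (A * Q) = frob A := by
  rw [← sq_eq_sq₀ (frob_nonneg _) (frob_nonneg _), frob_sq, frob_sq, transpose_mul,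
    Matrix.mul_assoc, ← Matrix.mul_assoc Q, hQ.2, Matrix.one_mul]

lemma frob_isOrth_mul {n : Type*} [Fintype n] (A : Matrix (Fin d) n ℝ) (hQ : IsOrth Q) :
    frob (Q * A) = frob A := by
  rw [← frob_transpose, transpose_mul, frob_mul_isOrth _ hQ.transpose, frob_transpose]

lemma vnorm_vecMul_isOrth (v : Fin d → ℝ) (hQ : IsOrth Q) : vnorm (v ᵥ* Q) = vnorm v := by
  rw [← sq_eq_sq₀ (vnorm_nonneg _) (vnorm_nonneg _), ← dotProduct_self_eq_vnorm_sq,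
    ← dotProduct_self_eq_vnorm_sq, ← dotProduct_mulVec, ← mulVec_transpose, mulVec_mulVec, hQ.2,
    one_mulVec]

end Orthogonal

section Spectral

variable {d : ℕ} {A : Matrix (Fin d) (Fin d) ℝ}

lemma vnorm_eigenvectorBasis (hA : A.IsHermitian) (j : Fin d) :
    vnorm ⇑(hA.eigenvectorBasis j) = 1 := by
  rw [vnorm_eq_norm]
  exact hA.eigenvectorBasis.orthonormal.1 j

lemma exists_isOrth_eq_mul_diagonal_mul_transpose (hA : A.IsHermitian) :
    ∃ U, IsOrth U ∧ A = U * diagonal hA.eigenvalues * Uᵀ := by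
  refine ⟨hA.eigenvectorUnitary, ?_, ?_⟩
  · simpa [star_eq_conjTranspose, conjTranspose_eq_transpose_of_trivial, IsOrth] using
      Unitary.mem_iff.mp hA.eigenvectorUnitary.2
  · conv_lhs => rw [hA.spectral_theorem, Unitary.conjStarAlgAut_apply]
    simp [star_eq_conjTranspose, conjTranspose_eq_transpose_of_trivial]

end Spectral

section SigmaMin

variable {d : ℕ} {Q : Matrix (Fin d) (Fin d) ℝ}

lemma sigmaMin_le {α β : Type*} [Fintype α] [Fintype β] (X : Matrix α β ℝ) {u : α → ℝ}
    (hu : vnorm u = 1) : sigmaMin X ≤ vnorm (u ᵥ* X) :=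
  csInf_le ⟨0, by rintro _ ⟨v, -, rfl⟩; exact vnorm_nonneg _⟩ ⟨u, hu, rfl⟩

lemma sigmaMin_mul_isOrth {m : Type*} [Fintype m] (X : Matrix m (Fin d) ℝ) (hQ : IsOrth Q) :
    sigmaMin (X * Q) = sigmaMin X := by
  simp only [sigmaMin, ← vecMul_vecMul, vnorm_vecMul_isOrth _ hQ]

lemma sigmaMin_nonneg {α β : Type*} [Fintype α] [Fintype β] (X : Matrix α β ℝ) :
    0 ≤ sigmaMin X :=
  Real.sInf_nonneg (by rintro _ ⟨u, -, rfl⟩; exact vnorm_nonneg _)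

end SigmaMin

section Householder

variable {d : ℕ}

def householder (u : Fin d → ℝ) : Matrix (Fin d) (Fin d) ℝ := 1 - (2 : ℝ) • vecMulVec u u

lemma householder_transpose (u : Fin d → ℝ) : (householder u)ᵀ = householder u := by
  simp [householder, transpose_vecMulVec]

lemma householder_isOrth {u : Fin d → ℝ} (hu : u ⬝ᵥ u = 1) : IsOrth (householder u) := by
  have hsq : householder u * householder u = 1 := by
    simp only [householder, sub_mul, mul_sub, Matrix.one_mul, Matrix.mul_one, smul_mul_smul,
      vecMulVec_mul_vecMulVec, hu, one_smul]
    module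
  rw [IsOrth, householder_transpose]
  exact ⟨hsq, hsq⟩

lemma trace_householder_mul (u : Fin d → ℝ) (M : Matrix (Fin d) (Fin d) ℝ) :
    trace (householder u * M) = trace M - 2 * (u ⬝ᵥ (u ᵥ* M)) := by
  simp [householder, sub_mul, vecMulVec_mul]

lemma trace_householder_mul_householder_mul (u v : Fin d → ℝ) (M : Matrix (Fin d) (Fin d) ℝ) :
    trace (householder v * householder u * M) = trace M - 2 * (u ⬝ᵥ (u ᵥ* M))
      - 2 * (v ⬝ᵥ (v ᵥ* M)) + 4 * (v ⬝ᵥ u) * (v ⬝ᵥ (u ᵥ* M)) := by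
  simp only [householder, mul_sub, mul_one, Algebra.mul_smul_comm, sub_mul, one_mul,
    Algebra.smul_mul_assoc, vecMulVec_mul, vecMul_vecMulVec, vecMulVec_smul, trace_sub, trace_smul,
    trace_vecMulVec, smul_eq_mul]
  ring

end Householder

lemma eq_zero_of_forall_mul_le {a b : ℝ} (h : ∀ k, k * b ≤ a) : b = 0 := by
  by_contra hb
  have := h ((|a| + 1) / b)
  rw [div_mul_cancel₀ _ hb] at this
  linarith [le_abs_self a]

section TraceMaximizer

variable {d : ℕ} {M : Matrix (Fin d) (Fin d) ℝ}

lemma transpose_eq_of_forall_trace_le (hM : ∀ Q, IsOrth Q → trace (Q * M) ≤ trace M) :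
    Mᵀ = M := by
  ext i j
  rcases eq_or_ne j i with rfl | hji
  · rfl
  suffices ∀ k : ℝ, k * (M i j - M j i) ≤ M i i + M j j by
    simpa [sub_eq_zero, eq_comm] using eq_zero_of_forall_mul_le this
  -- Test `M` against the rotation `H_v H_{e_i}` in the `(i, j)`-plane, `v = (k e_i + e_j) / r`.
  intro k
  set r := √(1 + k ^ 2)
  have hr : 0 < r := by positivity
  have hr2 : r ^ 2 = 1 + k ^ 2 := Real.sq_sqrt (by positivity)
  set v : Fin d → ℝ := Pi.single i (k / r) + Pi.single j (1 / r)
  have hv : v ⬝ᵥ v = 1 := by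
    simp only [one_div, dotProduct_add, dotProduct_single, Pi.add_apply, Pi.single_eq_same,
      ne_eq, hji, hji.symm, not_false_eq_true, Pi.single_eq_of_ne, add_zero, zero_add, v]
    field_simp
    linarith
  have := hM _ ((householder_isOrth hv).mul (householder_isOrth (u := Pi.single i 1) (by simp)))
  rw [trace_householder_mul_householder_mul] at this
  simp only [single_vecMul, one_smul, single_dotProduct, row_apply, one_mul, one_div,
    add_vecMul, dotProduct_add, dotProduct_smul, add_dotProduct, smul_eq_mul, dotProduct_single,
    Pi.add_apply, Pi.single_eq_same, ne_eq, hji.symm, not_false_eq_true, Pi.single_eq_of_ne,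
    add_zero, mul_one, v] at this
  field_simp at this
  rw [hr2] at this
  linarith

lemma eigenvalues_nonneg_of_forall_trace_le
    (hA : M.IsHermitian) (hM : ∀ Q, IsOrth Q → trace (Q * M) ≤ trace M) (j : Fin d) :
    0 ≤ hA.eigenvalues j := by
  set v := ⇑(hA.eigenvectorBasis j)
  have hv : v ⬝ᵥ v = 1 := by rw [dotProduct_self_eq_vnorm_sq, vnorm_eigenvectorBasis, one_pow]
  have h := hM _ (householder_isOrth hv)
  rw [trace_householder_mul, ← mulVec_transpose, isHermitian_iff_isSymm.1 hA,
    hA.mulVec_eigenvectorBasis, dotProduct_smul, hv, smul_eq_mul, mul_one] at h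
  linarith

end TraceMaximizer

section Sylvester

lemma mul_frob_le_frob_diagonal_mul_add_mul_diagonal {m n : Type*} [Fintype m] [Fintype n]
    [DecidableEq m] [DecidableEq n] {α β : ℝ} {lam : m → ℝ} {mu : n → ℝ}
    (hlam : ∀ i, α ≤ lam i) (hmu : ∀ j, β ≤ mu j) (hαβ : 0 ≤ α + β) (W : Matrix m n ℝ) :
    (α + β) * frob W ≤ frob (diagonal lam * W + W * diagonal mu) := by
  rw [frob, frob, ← Real.sqrt_sq hαβ, ← Real.sqrt_mul (sq_nonneg _), Finset.mul_sum]
  refine Real.sqrt_le_sqrt (Finset.sum_le_sum fun i _ => ?_)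
  rw [Finset.mul_sum]
  refine Finset.sum_le_sum fun j _ => ?_
  have hij : α + β ≤ lam i + mu j := add_le_add (hlam i) (hmu j)
  have hentry : (diagonal lam * W + W * diagonal mu) i j = (lam i + mu j) * W i j := by
    simp only [Matrix.add_apply, diagonal_mul, mul_diagonal]
    ring
  rw [hentry, mul_pow]
  gcongr

variable {d : ℕ} {A B : Matrix (Fin d) (Fin d) ℝ}

lemma mul_frob_le_frob_mul_add_mul (hA : A.IsHermitian) (hB : B.IsHermitian) {α β : ℝ}
    (hα : ∀ i, α ≤ hA.eigenvalues i) (hβ : ∀ j, β ≤ hB.eigenvalues j) (hαβ : 0 ≤ α + β)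
    (W : Matrix (Fin d) (Fin d) ℝ) :
    (α + β) * frob W ≤ frob (A * W + W * B) := by
  obtain ⟨U, hU, hUA⟩ := exists_isOrth_eq_mul_diagonal_mul_transpose hA
  obtain ⟨V, hV, hVB⟩ := exists_isOrth_eq_mul_diagonal_mul_transpose hB
  have hconj : Uᵀ * (A * W + W * B) * V
      = diagonal hA.eigenvalues * (Uᵀ * W * V) + (Uᵀ * W * V) * diagonal hB.eigenvalues := by
    conv_lhs => rw [hUA, hVB]
    simp only [Matrix.mul_add, Matrix.add_mul, Matrix.mul_assoc, hV.1, Matrix.mul_one]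
    simp only [← Matrix.mul_assoc Uᵀ U, hU.1, Matrix.one_mul]
  have hframe : ∀ Z : Matrix (Fin d) (Fin d) ℝ, frob (Uᵀ * Z * V) = frob Z := fun Z => by
    rw [frob_mul_isOrth _ hV, frob_isOrth_mul _ hU.transpose]
  rw [← hframe W, ← hframe (A * W + W * B), hconj]
  exact mul_frob_le_frob_diagonal_mul_add_mul_diagonal hα hβ hαβ _

end Sylvester

section Polar

variable {d : ℕ} {X Y R R' Q : Matrix (Fin d) (Fin d) ℝ}

lemma frob_sub_sq_of_isOrth (X : Matrix (Fin d) (Fin d) ℝ) (hQ : IsOrth Q) :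
    frob (X - Q) ^ 2 = frob X ^ 2 - 2 * trace (Qᵀ * X) + d := by
  have hQX : trace (Q * Xᵀ) = trace (Qᵀ * X) := by
    rw [← trace_transpose, transpose_mul, transpose_transpose, trace_mul_comm]
  rw [frob_sq, frob_sq, transpose_sub, Matrix.mul_sub, Matrix.sub_mul, Matrix.sub_mul, hQ.2,
    trace_sub, trace_sub, trace_sub, trace_mul_comm X Qᵀ, hQX, trace_one, Fintype.card_fin]
  ring

lemma IsPolar.trace_le (hR : IsPolar X R) (hQ : IsOrth Q) :
    trace (Qᵀ * X) ≤ trace (Rᵀ * X) := by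
  have h := pow_le_pow_left₀ (frob_nonneg _) (hR.2 Q hQ) 2
  rw [frob_sub_sq_of_isOrth X hR.1, frob_sub_sq_of_isOrth X hQ] at h
  linarith

lemma IsPolar.trace_mul_le (hR : IsPolar X R) (hQ : IsOrth Q) :
    trace (Q * (Rᵀ * X)) ≤ trace (Rᵀ * X) := by
  simpa [transpose_mul, Matrix.mul_assoc] using hR.trace_le (hR.1.mul hQ.transpose)

lemma IsPolar.isSymm (hR : IsPolar X R) : (Rᵀ * X).IsSymm :=
  transpose_eq_of_forall_trace_le fun _ => hR.trace_mul_le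

lemma IsPolar.isHermitian (hR : IsPolar X R) : (Rᵀ * X).IsHermitian :=
  isHermitian_iff_isSymm.2 hR.isSymm

lemma IsPolar.sigmaMin_le_eigenvalues (hR : IsPolar X R) (j : Fin d) :
    sigmaMin X ≤ hR.isHermitian.eigenvalues j := by
  set v := ⇑(hR.isHermitian.eigenvectorBasis j)
  have hv := vnorm_eigenvectorBasis hR.isHermitian j
  have hnonneg := eigenvalues_nonneg_of_forall_trace_le hR.isHermitian (fun _ => hR.trace_mul_le) j
  have hRv : vnorm (R *ᵥ v) = 1 := by
    rw [← vecMul_transpose, vnorm_vecMul_isOrth _ hR.1.transpose, hv]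
  have hvX : (R *ᵥ v) ᵥ* X = hR.isHermitian.eigenvalues j • v := by
    rw [← vecMul_transpose, vecMul_vecMul, ← mulVec_transpose,
      hR.isSymm.eq, hR.isHermitian.mulVec_eigenvectorBasis]
  calc sigmaMin X ≤ vnorm ((R *ᵥ v) ᵥ* X) := sigmaMin_le X hRv
    _ = hR.isHermitian.eigenvalues j := by
      rw [hvX, vnorm_eq_norm, WithLp.toLp_smul, norm_smul, ← vnorm_eq_norm, hv, mul_one,
        Real.norm_of_nonneg hnonneg]

lemma IsPolar.mul_frob_sub_le (hR : IsPolar X R) (hR' : IsPolar Y R') :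
    (sigmaMin X + sigmaMin Y) * frob (R - R') ≤ 2 * frob (X - Y) := by
  have hXR : Xᵀ * R = Rᵀ * X := by simpa using hR.isSymm.eq
  have hYR : Yᵀ * R' = R'ᵀ * Y := by simpa using hR'.isSymm.eq
  have hsylv : (Rᵀ * X) * (Rᵀ * R' - 1) + (Rᵀ * R' - 1) * (R'ᵀ * Y)
      = (X - Y)ᵀ * R' - Rᵀ * (X - Y) := by
    calc (Rᵀ * X) * (Rᵀ * R' - 1) + (Rᵀ * R' - 1) * (R'ᵀ * Y)
        = Xᵀ * (R * Rᵀ) * R' - Rᵀ * X + Rᵀ * (R' * R'ᵀ) * Y - R'ᵀ * Y := by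
          rw [← hXR]; simp only [Matrix.mul_sub, Matrix.sub_mul, Matrix.mul_assoc,
            Matrix.mul_one, Matrix.one_mul]; abel
      _ = (X - Y)ᵀ * R' - Rᵀ * (X - Y) := by
          rw [hR.1.2, hR'.1.2, Matrix.mul_one, Matrix.mul_one, ← hYR, transpose_sub,
            Matrix.sub_mul, Matrix.mul_sub]; abel
  have hW : frob (Rᵀ * R' - 1) = frob (R - R') := by
    rw [← hR.1.1, ← Matrix.mul_sub, frob_isOrth_mul _ hR.1.transpose, frob_sub_comm]
  calc (sigmaMin X + sigmaMin Y) * frob (R - R')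
      ≤ frob ((Rᵀ * X) * (Rᵀ * R' - 1) + (Rᵀ * R' - 1) * (R'ᵀ * Y)) := by
        rw [← hW]
        exact mul_frob_le_frob_mul_add_mul hR.isHermitian hR'.isHermitian
          hR.sigmaMin_le_eigenvalues hR'.sigmaMin_le_eigenvalues
          (add_nonneg (sigmaMin_nonneg X) (sigmaMin_nonneg Y)) _
    _ ≤ frob ((X - Y)ᵀ * R') + frob (Rᵀ * (X - Y)) := hsylv ▸ frob_sub_le _ _
    _ = 2 * frob (X - Y) := by
        rw [frob_mul_isOrth _ hR'.1, frob_isOrth_mul _ hR.1.transpose, frob_transpose]; ring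

lemma IsPolar.mul_isOrth (hR : IsPolar X R) (hQ : IsOrth Q) : IsPolar (X * Q) (R * Q) := by
  refine ⟨hR.1.mul hQ, fun Q' hQ' => ?_⟩
  have hQ'Q : X * Q - Q' = (X - Q' * Qᵀ) * Q := by
    rw [Matrix.sub_mul, Matrix.mul_assoc, hQ.1, Matrix.mul_one]
  rw [← Matrix.sub_mul, hQ'Q, frob_mul_isOrth _ hQ, frob_mul_isOrth _ hQ]
  exact hR.2 _ (hQ'.mul hQ.transpose)

end Polar

section Blocks

variable {n d k : ℕ}

lemma frob_sq_eq_sum_blk (A : Matrix (Fin n × Fin d) (Fin k) ℝ) :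
    frob A ^ 2 = ∑ i, frob (blk A i) ^ 2 := by
  simp only [frob_sq_eq_sum, Fintype.sum_prod_type]
  rfl

lemma mul_frob_le_mul_frob_of_blk {a b : ℝ} (ha : 0 ≤ a) (hb : 0 ≤ b)
    {A B : Matrix (Fin n × Fin d) (Fin k) ℝ}
    (h : ∀ i, a * frob (blk A i) ≤ b * frob (blk B i)) : a * frob A ≤ b * frob B := by
  have ha' := mul_nonneg ha (frob_nonneg A)
  have hb' := mul_nonneg hb (frob_nonneg B)
  rw [← pow_le_pow_iff_left₀ ha' hb' two_ne_zero, mul_pow, mul_pow, frob_sq_eq_sum_blk,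
    frob_sq_eq_sum_blk, Finset.mul_sum, Finset.mul_sum]
  refine Finset.sum_le_sum fun i _ => ?_
  rw [← mul_pow, ← mul_pow]
  exact pow_le_pow_left₀ (mul_nonneg ha (frob_nonneg _)) (h i) 2

lemma dF_le (X Y : Matrix (Fin n × Fin d) (Fin d) ℝ) {Q : Matrix (Fin d) (Fin d) ℝ}
    (hQ : IsOrth Q) : dF X Y ≤ frob (X - Y * Q) :=
  csInf_le ⟨0, by rintro _ ⟨Q, -, rfl⟩; exact frob_nonneg _⟩ ⟨Q, hQ, rfl⟩

lemma le_dF {X Y : Matrix (Fin n × Fin d) (Fin d) ℝ} {r : ℝ}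
    (h : ∀ Q, IsOrth Q → r ≤ frob (X - Y * Q)) : r ≤ dF X Y :=
  le_csInf ⟨_, 1, isOrth_one, rfl⟩ (by rintro _ ⟨Q, hQ, rfl⟩; exact h Q hQ)

end Blocks

theorem polarBlocks_lipschitz_general (n d : ℕ)
    (X Y : Matrix (Fin n × Fin d) (Fin d) ℝ)
    (h : 0 < ⨅ i : Fin n, (sigmaMin (blk X i) + sigmaMin (blk Y i)))
    (PX PY : Matrix (Fin n × Fin d) (Fin d) ℝ)
    (hPX : IsPolarBlocks X PX) (hPY : IsPolarBlocks Y PY) :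
    dF PX PY ≤ 2 * dF X Y / ⨅ i : Fin n, (sigmaMin (blk X i) + sigmaMin (blk Y i)) := by
  set σ := ⨅ i : Fin n, (sigmaMin (blk X i) + sigmaMin (blk Y i))
  have hblk : ∀ Q, IsOrth Q → ∀ i,
      σ * frob (blk (PX - PY * Q) i) ≤ 2 * frob (blk (X - Y * Q) i) := fun Q hQ i => by
    have hσ : σ ≤ sigmaMin (blk X i) + sigmaMin (blk Y i * Q) := by
      rw [sigmaMin_mul_isOrth _ hQ]
      exact ciInf_le (Set.finite_range _).bddBelow i
    calc σ * frob (blk PX i - blk PY i * Q)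
        ≤ (sigmaMin (blk X i) + sigmaMin (blk Y i * Q)) * frob (blk PX i - blk PY i * Q) :=
          mul_le_mul_of_nonneg_right hσ (frob_nonneg _)
      _ ≤ 2 * frob (blk X i - blk Y i * Q) := (hPX i).mul_frob_sub_le ((hPY i).mul_isOrth hQ)
  have hdF : σ * dF PX PY / 2 ≤ dF X Y := le_dF fun Q hQ => (div_le_iff₀' two_pos).2 <|
    (mul_le_mul_of_nonneg_left (dF_le PX PY hQ) h.le).trans
      (mul_frob_le_mul_frob_of_blk h.le zero_le_two (hblk Q hQ))
  rw [le_div_iff₀ h]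
  linarith

/-- Lemma 5.4: Lipschitz continuity of the blockwise polar factor map P_n
with respect to d_F. -/
theorem polarBlocks_lipschitz (n d : ℕ) (hn : 1 ≤ n)
    (X Y : Matrix (Fin n × Fin d) (Fin d) ℝ)
    (h : 0 < ⨅ i : Fin n, (sigmaMin (blk X i) + sigmaMin (blk Y i)))
    (PX PY : Matrix (Fin n × Fin d) (Fin d) ℝ)
    (hPX : IsPolarBlocks X PX) (hPY : IsPolarBlocks Y PY) :
    dF PX PY ≤ 2 * dF X Y / ⨅ i : Fin n, (sigmaMin (blk X i) + sigmaMin (blk Y i)) :=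
  polarBlocks_lipschitz_general n d X Y h PX PY hPX hPY

end GOPP
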